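/- arXiv:2211.03995 — 5 statements merged into one kernel-verified Lean document; each statement's English description precedes it below -/
import Mathlib

section
/- For any trie T with n edges (n ≥ 1) and l leaves, the number of maximal palindromes in T is exactly 2n − l, i.e., |MPal(T)| = 2n − l. -/
/-!
Every occurrence of a palindrome has a centre: a node (even length) or an edge (odd length).
Since sibling edges carry distinct labels, an occurrence is determined by its centre and length,
and the occurrences around a fixed centre are nested; so each centre carries exactly one maximal
palindrome, the longest one. The centres that occur are the `n` edges and the non-root nodes that
are not leaves (the empty palindrome at a leaf or at the root is not maximal), which gives
`n + (n - l)`.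
-/

/-- A trie over alphabet `α`: a finite rooted tree with a parent function,
every node reaches the root by iterating `par`, each non-root node carries the
label of the edge to its parent, and distinct children of a node have
distinct labels. -/
structure Trie (α : Type*) where
  V : Type
  fV : Fintype V
  dV : DecidableEq V
  root : V
  par : V → V
  lab : V → α
  par_root : par root = root
  reaches_root : ∀ v : V, ∃ k : ℕ, par^[k] v = root
  distinct_labels : ∀ u v : V, u ≠ root → v ≠ root →
    par u = par v → lab u = lab v → u = v

attribute [instance] Trie.fV Trie.dV

namespace Trie

variable {α : Type*}

/-- The depth of a node: its distance to the root. -/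
noncomputable def depth (T : Trie α) (v : T.V) : ℕ :=
  Nat.find (T.reaches_root v)

/-- `pref T u k` is the string of the `k` edge labels on the path from `u`
towards the root (read upward). -/
def pref (T : Trie α) : T.V → ℕ → List α
  | _, 0 => []
  | u, k + 1 => T.lab u :: T.pref (T.par u) k

/-- A node is a leaf if it is the parent of no (non-root) node. -/
def IsLeaf (T : Trie α) (u : T.V) : Prop :=
  ∀ v : T.V, v ≠ T.root → T.par v ≠ u

/-- The set of maximal palindromes in a trie `T`: pairs `(u, k)` such that
`pref T u k` is a palindrome and the maximality conditions of the definition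
hold. -/
noncomputable def MPal (T : Trie α) : Set (T.V × ℕ) :=
  { p | p.2 ≤ T.depth p.1 ∧ T.pref p.1 p.2 = (T.pref p.1 p.2).reverse ∧
      (if 1 ≤ p.2 then
        -- (a) `u` is not a leaf and no child extends the palindrome, or
        -- (b) `u` is a leaf, or (c) the occurrence ends at the root
        ((¬ T.IsLeaf p.1 ∧ ∀ u' : T.V, u' ≠ T.root → T.par u' = p.1 →
            T.pref u' (p.2 + 2) ≠ (T.pref u' (p.2 + 2)).reverse) ∨
          T.IsLeaf p.1 ∨ T.par^[p.2] p.1 = T.root)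
      else
        -- the empty palindrome at `u` is maximal iff `u` is neither a leaf
        -- nor the root and no child of `u` has the same label as `u`
        (¬ T.IsLeaf p.1 ∧ p.1 ≠ T.root ∧
          ∀ u' : T.V, u' ≠ T.root → T.par u' = p.1 → T.lab u' ≠ T.lab p.1)) }

end Trie

theorem List.cons_append_singleton_eq_reverse_iff {β : Type*} (a b : β) (l : List β) :
    a :: (l ++ [b]) = (a :: (l ++ [b])).reverse ↔ a = b ∧ l = l.reverse := by
  have hrev : (a :: (l ++ [b])).reverse = b :: (l.reverse ++ [a]) := by simp
  rw [hrev, List.cons.injEq, and_congr_right_iff]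
  rintro rfl
  exact ⟨fun h => List.append_inj_left' h rfl, fun h => by rw [← h]⟩

namespace Trie

variable {α : Type*} (T : Trie α)

lemma iterate_depth (u : T.V) : T.par^[T.depth u] u = T.root :=
  Nat.find_spec (T.reaches_root u)

lemma depth_le_of_iterate_eq_root {u : T.V} {k : ℕ} (h : T.par^[k] u = T.root) :
    T.depth u ≤ k :=
  Nat.find_min' _ h

lemma iterate_ne_root_of_lt_depth {u : T.V} {k : ℕ} (h : k < T.depth u) :
    T.par^[k] u ≠ T.root :=
  Nat.find_min _ h

lemma depth_root : T.depth T.root = 0 :=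
  Nat.le_zero.mp (T.depth_le_of_iterate_eq_root rfl)

lemma depth_pos {u : T.V} (h : u ≠ T.root) : 0 < T.depth u :=
  Nat.pos_of_ne_zero fun h0 => h (by simpa [h0] using T.iterate_depth u)

lemma depth_eq_depth_par_add_one {u : T.V} (h : u ≠ T.root) :
    T.depth u = T.depth (T.par u) + 1 := by
  have hpos := T.depth_pos h
  have hle : T.depth (T.par u) ≤ T.depth u - 1 := by
    apply T.depth_le_of_iterate_eq_root
    rw [← Function.iterate_succ_apply, Nat.succ_eq_add_one, Nat.sub_add_cancel hpos]
    exact T.iterate_depth u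
  have hge : T.depth u ≤ T.depth (T.par u) + 1 :=
    T.depth_le_of_iterate_eq_root (T.iterate_depth (T.par u))
  omega

lemma not_isLeaf_root {v : T.V} (hv : v ≠ T.root) : ¬ T.IsLeaf T.root := by
  have hpos := T.depth_pos hv
  intro hleaf
  refine hleaf (T.par^[T.depth v - 1] v) (T.iterate_ne_root_of_lt_depth (by omega)) ?_
  rw [← Function.iterate_succ_apply' T.par, Nat.succ_eq_add_one, Nat.sub_add_cancel hpos]
  exact T.iterate_depth v

lemma pref_succ_eq_concat (u : T.V) (k : ℕ) :
    T.pref u (k + 1) = T.pref u k ++ [T.lab (T.par^[k] u)] := by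
  induction k generalizing u with
  | zero => rfl
  | succ k ih => rw [pref, ih, pref, Function.iterate_succ_apply, List.cons_append]

def IsPalOcc (u : T.V) (k : ℕ) : Prop :=
  k ≤ T.depth u ∧ T.pref u k = (T.pref u k).reverse

/-- The centre of the occurrence `(u, k)`: the node halfway up and the parity of `k`; for odd `k`
the centre is really the edge from that node to its parent. -/
def center (p : T.V × ℕ) : T.V × ℕ :=
  (T.par^[p.2 / 2] p.1, p.2 % 2)

lemma center_iterate (u : T.V) (k i : ℕ) :
    T.center (T.par^[i] u, k) = T.center (u, k + 2 * i) := by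
  have hhalf : (k + 2 * i) / 2 = k / 2 + i := by omega
  simp only [center, hhalf, Function.iterate_add_apply, Nat.add_mul_mod_self_left]

lemma center_par (u : T.V) (k : ℕ) : T.center (T.par u, k) = T.center (u, k + 2) :=
  T.center_iterate u k 1

lemma isPalOcc_zero (u : T.V) : T.IsPalOcc u 0 :=
  ⟨Nat.zero_le _, rfl⟩

variable {T}

lemma isPalOcc_one {u : T.V} (hu : u ≠ T.root) : T.IsPalOcc u 1 :=
  ⟨T.depth_pos hu, rfl⟩

lemma IsPalOcc.ne_root {u : T.V} {k : ℕ} (h : T.IsPalOcc u (k + 1)) : u ≠ T.root := by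
  rintro rfl
  have := T.depth_root ▸ h.1
  omega

lemma IsPalOcc.of_add_two {u : T.V} {k : ℕ} (h : T.IsPalOcc u (k + 2)) :
    u ≠ T.root ∧ T.IsPalOcc (T.par u) k ∧ T.lab u = T.lab (T.par^[k] (T.par u)) := by
  have hne : u ≠ T.root := IsPalOcc.ne_root (k := k + 1) h
  obtain ⟨hdepth, hpal⟩ := h
  rw [pref, pref_succ_eq_concat, List.cons_append_singleton_eq_reverse_iff] at hpal
  have := T.depth_eq_depth_par_add_one hne
  exact ⟨hne, ⟨by omega, hpal.2⟩, hpal.1⟩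

lemma IsPalOcc.iterate {u : T.V} {k : ℕ} : ∀ {i : ℕ}, T.IsPalOcc u (k + 2 * i) →
    T.IsPalOcc (T.par^[i] u) k
  | 0, h => h
  | i + 1, h => by
    rw [Function.iterate_succ_apply]
    exact IsPalOcc.iterate (show k + 2 * i + 2 = k + 2 * (i + 1) by ring ▸ h).of_add_two.2.1

lemma IsPalOcc.eq_of_center_eq {k : ℕ} {u₁ u₂ : T.V} (h₁ : T.IsPalOcc u₁ k)
    (h₂ : T.IsPalOcc u₂ k) (hc : T.center (u₁, k) = T.center (u₂, k)) : u₁ = u₂ := by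
  induction k using Nat.strong_induction_on generalizing u₁ u₂ with
  | _ k ih =>
  match k with
  | 0 | 1 => simpa [center] using hc
  | k + 2 =>
    obtain ⟨hne₁, hocc₁, hlab₁⟩ := h₁.of_add_two
    obtain ⟨hne₂, hocc₂, hlab₂⟩ := h₂.of_add_two
    have hpar : T.par u₁ = T.par u₂ :=
      ih k (by omega) hocc₁ hocc₂ (by rwa [center_par, center_par])
    exact T.distinct_labels _ _ hne₁ hne₂ hpar (by rw [hlab₁, hlab₂, hpar])

lemma isPalOcc_two_iff {u : T.V} (hu : u ≠ T.root) (hpar : T.par u ≠ T.root) :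
    T.IsPalOcc u 2 ↔ T.lab u = T.lab (T.par u) := by
  have := T.depth_eq_depth_par_add_one hu
  have := T.depth_pos hpar
  simp only [IsPalOcc, pref, List.reverse_cons, List.reverse_nil, List.nil_append,
    List.cons_append, List.cons.injEq, and_true]
  constructor
  · exact fun h => h.2.1
  · exact fun h => ⟨by omega, h, h.symm⟩

lemma mem_MPal_iff {u : T.V} {k : ℕ} :
    (u, k) ∈ T.MPal ↔ T.IsPalOcc u k ∧ (k = 0 → u ≠ T.root ∧ ¬ T.IsLeaf u) ∧
      ∀ u', u' ≠ T.root → T.par u' = u → ¬ T.IsPalOcc u' (k + 2) := by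
  simp only [MPal, Set.mem_ofPred_eq]
  refine and_assoc.symm.trans (and_congr_right fun hocc => ?_)
  split_ifs with hk
  · simp only [show k ≠ 0 by omega, false_implies, true_and]
    constructor
    · rintro (⟨-, hext⟩ | hleaf | hroot) u' hne hpar hocc'
      · exact hext u' hne hpar hocc'.2
      · exact hleaf u' hne hpar
      · have := T.depth_le_of_iterate_eq_root hroot
        have := hpar ▸ T.depth_eq_depth_par_add_one hne
        have := hocc'.1
        omega
    · intro hmax
      by_cases hleaf : T.IsLeaf u
      · exact Or.inr (Or.inl hleaf)
      by_cases hroot : T.par^[k] u = T.root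
      · exact Or.inr (Or.inr hroot)
      have hlt : k < T.depth u := lt_of_le_of_ne hocc.1 fun h => hroot (h ▸ T.iterate_depth u)
      refine Or.inl ⟨hleaf, fun u' hne hpar hpal => hmax u' hne hpar ⟨?_, hpal⟩⟩
      have := hpar ▸ T.depth_eq_depth_par_add_one hne
      omega
  · obtain rfl : k = 0 := by omega
    constructor
    · rintro ⟨hleaf, hne, hlab⟩
      refine ⟨fun _ => ⟨hne, hleaf⟩, fun u' hne' hpar h2 => hlab u' hne' hpar ?_⟩
      rw [← hpar] at hne ⊢
      exact (isPalOcc_two_iff hne' hne).1 h2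
    · rintro ⟨hnd, hmax⟩
      obtain ⟨hne, hleaf⟩ := hnd rfl
      refine ⟨hleaf, hne, fun u' hne' hpar hlab => hmax u' hne' hpar ?_⟩
      rw [← hpar] at hne hlab
      exact (isPalOcc_two_iff hne' hne).2 hlab

lemma eq_of_mem_MPal_of_center_eq {u₁ u₂ : T.V} {k₁ k₂ : ℕ} (h₁ : (u₁, k₁) ∈ T.MPal)
    (h₂ : T.IsPalOcc u₂ k₂) (hc : T.center (u₁, k₁) = T.center (u₂, k₂)) (hk : k₁ ≤ k₂) :
    (u₁, k₁) = (u₂, k₂) := by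
  obtain ⟨hocc₁, -, hmax⟩ := mem_MPal_iff.1 h₁
  obtain ⟨i, rfl⟩ : ∃ i, k₂ = k₁ + 2 * i := by
    simp only [center, Prod.mk.injEq] at hc
    exact ⟨(k₂ - k₁) / 2, by omega⟩
  cases i with
  | zero =>
    simp only [mul_zero, add_zero] at h₂ hc ⊢
    rw [hocc₁.eq_of_center_eq h₂ hc]
  | succ i =>
    -- the ancestor of `u₂` at distance `i` would extend `(u₁, k₁)` by one character on each side
    have hv : T.IsPalOcc (T.par^[i] u₂) (k₁ + 2) :=
      IsPalOcc.iterate (by rwa [show k₁ + 2 + 2 * i = k₁ + 2 * (i + 1) by ring])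
    obtain ⟨hne, hpar, -⟩ := hv.of_add_two
    refine absurd hv (hmax _ hne (hpar.eq_of_center_eq hocc₁ ?_))
    rw [hc, center_par, center_iterate]
    congr 2
    ring

lemma injOn_center_MPal : Set.InjOn T.center T.MPal := by
  rintro ⟨u₁, k₁⟩ h₁ ⟨u₂, k₂⟩ h₂ hc
  rcases le_total k₁ k₂ with hk | hk
  · exact eq_of_mem_MPal_of_center_eq h₁ (mem_MPal_iff.1 h₂).1 hc hk
  · exact (eq_of_mem_MPal_of_center_eq h₂ (mem_MPal_iff.1 h₁).1 hc.symm hk).symm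

lemma exists_mem_MPal_center_eq {v : T.V} {m : ℕ} (hocc : T.IsPalOcc v m)
    (hm : m = 0 → v ≠ T.root ∧ ¬ T.IsLeaf v) : ∃ p ∈ T.MPal, T.center p = T.center (v, m) := by
  classical
  set P : ℕ → Prop := fun k => m ≤ k ∧ ∃ u, T.IsPalOcc u k ∧ T.center (u, k) = T.center (v, m)
  set B := Finset.univ.sup T.depth
  have hbound : ∀ {k u}, T.IsPalOcc u k → k ≤ B := fun h =>
    h.1.trans (Finset.le_sup (Finset.mem_univ _))
  have hPm : P m := ⟨le_rfl, v, hocc, rfl⟩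
  obtain ⟨hmk, u, hu, hc⟩ := Nat.findGreatest_spec (hbound hocc) hPm
  refine ⟨(u, Nat.findGreatest P B), mem_MPal_iff.2 ⟨hu, fun hk => ?_, ?_⟩, hc⟩
  · obtain rfl : m = 0 := by omega
    rw [hk] at hu hc
    rw [hu.eq_of_center_eq hocc hc]
    exact hm rfl
  · intro u' hne hpar hu'
    have hPk : P (Nat.findGreatest P B + 2) := ⟨by omega, u', hu', by rw [← center_par, hpar, hc]⟩
    have := Nat.le_findGreatest (hbound hu') hPk
    omega

lemma center_mem_of_mem_MPal {u : T.V} {k : ℕ} (h : (u, k) ∈ T.MPal) :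
    T.center (u, k) ∈ {w | w ≠ T.root} ×ˢ {1} ∪ {w | w ≠ T.root ∧ ¬ T.IsLeaf w} ×ˢ {0} := by
  obtain ⟨hocc, hzero, -⟩ := mem_MPal_iff.1 h
  simp only [center]
  rcases Nat.eq_zero_or_pos k with rfl | hk
  · exact Or.inr ⟨hzero rfl, rfl⟩
  have hdepth := hocc.1
  have hw : T.par^[k / 2] u ≠ T.root := T.iterate_ne_root_of_lt_depth (by omega)
  rcases Nat.mod_two_eq_zero_or_one k with heven | hodd
  · refine Or.inr ⟨⟨hw, fun hleaf => hleaf (T.par^[k / 2 - 1] u) ?_ ?_⟩, heven⟩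
    · exact T.iterate_ne_root_of_lt_depth (by omega)
    · rw [← Function.iterate_succ_apply' T.par, Nat.succ_eq_add_one, Nat.sub_add_cancel (by omega)]
  · exact Or.inl ⟨hw, hodd⟩

lemma image_center_MPal :
    T.center '' T.MPal = {w | w ≠ T.root} ×ˢ {1} ∪ {w | w ≠ T.root ∧ ¬ T.IsLeaf w} ×ˢ {0} := by
  refine subset_antisymm (Set.image_subset_iff.2 fun p hp => center_mem_of_mem_MPal hp) ?_
  rintro ⟨w, ε⟩ (⟨hw, rfl⟩ | ⟨hw, rfl⟩)
  · obtain ⟨p, hp, hc⟩ := exists_mem_MPal_center_eq (isPalOcc_one hw) (by simp)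
    exact ⟨p, hp, hc.trans (by simp [center])⟩
  · obtain ⟨p, hp, hc⟩ := exists_mem_MPal_center_eq (T.isPalOcc_zero w) fun _ => hw
    exact ⟨p, hp, hc.trans (by simp [center])⟩

variable (T)

lemma ncard_MPal :
    T.MPal.ncard = {w | w ≠ T.root}.ncard + {w | w ≠ T.root ∧ ¬ T.IsLeaf w}.ncard := by
  rw [← injOn_center_MPal.ncard_image, image_center_MPal,
    Set.ncard_union_eq (Set.disjoint_prod.2 (Or.inr (by simp))), Set.ncard_prod, Set.ncard_prod,
    Set.ncard_singleton, Set.ncard_singleton, mul_one, mul_one]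

lemma ncard_ne_root : {w | w ≠ T.root}.ncard = Fintype.card T.V - 1 := by
  rw [← Set.compl_singleton_eq, Set.ncard_compl, Set.ncard_singleton, Nat.card_eq_fintype_card]

lemma ncard_ne_root_eq_add (hroot : ¬ T.IsLeaf T.root) :
    {w | w ≠ T.root}.ncard = {w | w ≠ T.root ∧ ¬ T.IsLeaf w}.ncard + {w | T.IsLeaf w}.ncard := by
  rw [← Set.ncard_union_eq]
  · congr 1
    ext w
    by_cases hleaf : T.IsLeaf w
    · have hw : w ≠ T.root := fun h => hroot (h ▸ hleaf)
      simp [hleaf, hw]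
    · simp [hleaf]
  · exact Set.disjoint_left.2 fun w hw hleaf => hw.2 hleaf

end Trie

/-- For any trie with `n ≥ 1` edges and `l` leaves, the number of maximal
palindromes is exactly `2n - l`. -/
theorem mpal_count {α : Type*} (T : Trie α) (n l : ℕ)
    (hn : n = Fintype.card T.V - 1)
    (hl : l = Set.ncard { v : T.V | T.IsLeaf v })
    (hn1 : 1 ≤ n) :
    (T.MPal).ncard = 2 * n - l := by
  obtain ⟨v, hv⟩ := Fintype.exists_ne_of_one_lt_card (by omega) T.root
  have hcenters := T.ncard_MPal
  have hedges := T.ncard_ne_root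
  have hleaves := T.ncard_ne_root_eq_add (T.not_isLeaf_root hv)
  omega
end

section
/- Any string S of length m contains at most m + 1 distinct palindromic substrings, where the empty string is counted as one of them. -/
/-- `substr S i j` is the substring `S[i..j]` of `S` (1-indexed), which is
empty when `i > j`. -/
def substr {α : Type*} (S : List α) (i j : ℕ) : List α :=
  (S.drop (i - 1)).take (j + 1 - i)

/-- The set of distinct palindromic substrings of `S`, including the empty
string. -/
def DPalStr {α : Type*} (S : List α) : Set (List α) :=
  { p | (p = [] ∨ ∃ i j : ℕ, 1 ≤ i ∧ i ≤ j ∧ j ≤ S.length ∧ substr S i j = p) ∧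
        p = p.reverse }

/-!
Appending a letter `a` to `S` creates at most one new palindromic factor. A new factor of
`S ++ [a]` must be a suffix of it; and if `p` is a palindromic suffix of a longer palindromic
suffix `q`, then `p` is also a prefix of `q`, so it ends before the last letter and already occurs
in `S`. Induction on `S` then bounds the count by `|S| + 1`, the `1` being the empty word.
-/

open List

section

variable {α : Type*}

theorem substr_infix (S : List α) (i j : ℕ) : substr S i j <:+: S :=
  (take_prefix _ _).isInfix.trans (drop_suffix _ _).isInfix

theorem exists_substr_eq_of_infix {S p : List α} (h : p <:+: S) (hp : p ≠ []) :
    ∃ i j : ℕ, 1 ≤ i ∧ i ≤ j ∧ j ≤ S.length ∧ substr S i j = p := by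
  obtain ⟨s, t, rfl⟩ := h
  have hlen : 0 < p.length := length_pos_iff.mpr hp
  refine ⟨s.length + 1, s.length + p.length, by omega, by omega, by simp, ?_⟩
  simp [substr, show s.length + p.length + 1 - (s.length + 1) = p.length by omega]

theorem mem_dPalStr_iff {S p : List α} : p ∈ DPalStr S ↔ p <:+: S ∧ p = p.reverse := by
  refine and_congr_left fun _ => ⟨?_, fun h => ?_⟩
  · rintro (rfl | ⟨i, j, -, -, -, rfl⟩)
    exacts [nil_infix, substr_infix S i j]
  · by_cases hp : p = []
    exacts [.inl hp, .inr (exists_substr_eq_of_infix h hp)]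

theorem dPalStr_nil : DPalStr ([] : List α) = {[]} := by
  ext p
  simp +contextual [mem_dPalStr_iff]

theorem List.IsSuffix.isPrefix_of_palindrome {p q : List α} (h : p <:+ q) (hp : p = p.reverse)
    (hq : q = q.reverse) : p <+: q := by
  rw [hp, hq]
  exact reverse_prefix.mpr h

theorem infix_of_append_suffix_append_singleton {p v S : List α} {a : α} (hv : v ≠ [])
    (h : p ++ v <:+ S ++ [a]) : p <:+: S := by
  obtain ⟨u, hu⟩ := h
  refine ⟨u, v.dropLast, ?_⟩
  rw [← dropLast_concat (l₁ := S) (b := a), ← hu, ← append_assoc, dropLast_append_of_ne_nil hv]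

theorem eq_of_palindrome_suffix_not_infix {S p q : List α} {a : α} (hpS : p <:+ S ++ [a])
    (hqS : q <:+ S ++ [a]) (hp : p = p.reverse) (hq : q = q.reverse) (hp_new : ¬ p <:+: S)
    (hpq : p.length ≤ q.length) : p = q := by
  obtain ⟨v, rfl⟩ := (suffix_of_suffix_length_le hpS hqS hpq).isPrefix_of_palindrome hp hq
  by_cases hv : v = []
  · simp [hv]
  · exact absurd (infix_of_append_suffix_append_singleton hv hqS) hp_new

theorem dPalStr_append_singleton_diff_subsingleton (S : List α) (a : α) :
    (DPalStr (S ++ [a]) \ DPalStr S).Subsingleton := by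
  have new_suffix : ∀ p ∈ DPalStr (S ++ [a]) \ DPalStr S,
      p <:+ S ++ [a] ∧ p = p.reverse ∧ ¬ p <:+: S := by
    rintro p ⟨hp, hpS⟩
    rw [mem_dPalStr_iff] at hp hpS
    have hp_new : ¬ p <:+: S := fun h => hpS ⟨h, hp.2⟩
    exact ⟨(infix_concat_iff.mp hp.1).resolve_right hp_new, hp.2, hp_new⟩
  intro p hp q hq
  obtain ⟨hpS, hp, hp_new⟩ := new_suffix p hp
  obtain ⟨hqS, hq, hq_new⟩ := new_suffix q hq
  rcases le_total p.length q.length with hpq | hqp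
  · exact eq_of_palindrome_suffix_not_infix hpS hqS hp hq hp_new hpq
  · exact (eq_of_palindrome_suffix_not_infix hqS hpS hq hp hq_new hqp).symm

theorem exists_dPalStr_append_singleton_subset_insert (S : List α) (a : α) :
    ∃ x, DPalStr (S ++ [a]) ⊆ insert x (DPalStr S) := by
  rcases (dPalStr_append_singleton_diff_subsingleton S a).eq_empty_or_singleton with h | ⟨x, h⟩
  · exact ⟨[], Set.sdiff_eq_empty.mp h |>.trans (Set.subset_insert _ _)⟩
  · refine ⟨x, ?_⟩
    rw [Set.insert_eq, Set.union_comm, ← Set.sdiff_subset_iff, h]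

end

/-- Any string of length `m` contains at most `m + 1` distinct palindromic
substrings (the empty string being counted as one of them). -/
theorem dpal_str_count {α : Type*} (S : List α) :
    (DPalStr S).Finite ∧ (DPalStr S).ncard ≤ S.length + 1 := by
  induction S using List.reverseRecOn with
  | nil => simp [dPalStr_nil]
  | append_singleton S a ih =>
    obtain ⟨x, hx⟩ := exists_dPalStr_append_singleton_subset_insert S a
    have hfin := ih.1.insert x
    refine ⟨hfin.subset hx, ?_⟩
    calc (DPalStr (S ++ [a])).ncard
        _ ≤ (insert x (DPalStr S)).ncard := Set.ncard_le_ncard hx hfin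
        _ ≤ (DPalStr S).ncard + 1 := Set.ncard_insert_le _ _
        _ ≤ (S ++ [a]).length + 1 := by simpa using ih.2
end

section
/- Let p and q be palindromes such that p is a proper prefix of q, and let S be a string in which q occurs at least once. Then the number of starting positions at which p occurs in S is strictly greater than the number of starting positions at which q occurs in S. -/
/-- `p` occurs in `S` at (1-indexed) position `t`, i.e. `S[t..t+|p|-1] = p`. -/
def OccursAt {α : Type*} (p S : List α) (t : ℕ) : Prop :=
  1 ≤ t ∧ t + p.length ≤ S.length + 1 ∧ p <+: S.drop (t - 1)

/-!
Every occurrence of `q` starts an occurrence of its prefix `p`, so the occurrences of `q` are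
among those of `p`. Being palindromes, `p` is also a suffix of `q`; the copy of `p` ending the
rightmost occurrence of `q` starts strictly after it, hence is an occurrence of `p` but not of `q`.
-/

namespace OccursAt

variable {α : Type*} {p q S : List α} {t : ℕ}

theorem of_isPrefix (hpq : p <+: q) (h : OccursAt q S t) : OccursAt p S t :=
  ⟨h.1, le_trans (by simpa using hpq.length_le) h.2.1, hpq.trans h.2.2⟩

theorem of_append_left {u : List α} (h : OccursAt (u ++ p) S t) :
    OccursAt p S (t + u.length) := by
  obtain ⟨ht, hlen, r, hr⟩ := h
  rw [List.length_append] at hlen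
  refine ⟨by omega, by omega, r, ?_⟩
  rw [show t + u.length - 1 = (t - 1) + u.length by omega, ← List.drop_drop, ← hr,
    List.append_assoc, List.drop_left]

theorem le_length_add_one (h : OccursAt p S t) : t ≤ S.length + 1 := by
  have := h.2.1
  omega

end OccursAt

theorem finite_setOf_occursAt {α : Type*} (p S : List α) :
    {t : ℕ | OccursAt p S t}.Finite :=
  (Set.finite_Iic (S.length + 1)).subset fun _ ht => OccursAt.le_length_add_one ht

theorem ncard_setOf_occursAt_lt_of_isPrefix_of_isSuffix {α : Type*} {p q S : List α}
    (hpre : p <+: q) (hsuf : p <:+ q) (hlen : p.length < q.length)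
    (hocc : ∃ t, OccursAt q S t) :
    {t : ℕ | OccursAt q S t}.ncard < {t : ℕ | OccursAt p S t}.ncard := by
  obtain ⟨t, htq, hmax⟩ :=
    (finite_setOf_occursAt q S).exists_maximalFor id _ hocc
  obtain ⟨u, rfl⟩ := hsuf
  have hu : 0 < u.length := by simpa using hlen
  have hp_occ : OccursAt p S (t + u.length) := htq.of_append_left
  have hq_not_occ : ¬ OccursAt (u ++ p) S (t + u.length) := fun h => by
    have := hmax (j := t + u.length) h (by simp)
    simp only [id_eq] at this
    omega
  exact Set.ncard_lt_ncard
    ⟨fun _ => OccursAt.of_isPrefix hpre, fun h => hq_not_occ (h hp_occ)⟩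
    (finite_setOf_occursAt p S)

/-- If `p` and `q` are palindromes, `p` is a proper prefix of `q`, and `q`
occurs at least once in `S`, then the number of starting positions at which
`p` occurs in `S` is strictly greater than the number of starting positions at
which `q` occurs in `S`. -/
theorem occurrence_count_proper_prefix_palindromes {α : Type*}
    (p q S : List α) (hp : p = p.reverse) (hq : q = q.reverse)
    (hpq : p <+: q) (hlen : p.length < q.length)
    (hocc : ∃ t : ℕ, OccursAt q S t) :
    Set.ncard { t : ℕ | OccursAt p S t } >
      Set.ncard { t : ℕ | OccursAt q S t } := by
  have hsuf : p <:+ q := by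
    rwa [← List.reverse_prefix, ← hp, ← hq]
  exact ncard_setOf_occursAt_lt_of_isPrefix_of_isSuffix hpq hsuf hlen hocc
end

section
/- Let p and q be palindromes with p a proper prefix of q, let S be a string, and let c be a character. Suppose that every occurrence of p in S is followed by c, i.e., whenever p occurs at position t in S, then t + |p| ≤ |S| and S[t + |p|] = c. Then every occurrence of q in S is followed by c: whenever q occurs at position t in S, then t + |q| ≤ |S| and S[t + |q|] = c. -/
theorem List.IsPrefix.isSuffix_of_palindrome {α : Type*} {p q : List α}
    (hp : p = p.reverse) (hq : q = q.reverse) (hpq : p <+: q) : p <:+ q := by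
  rw [hp, hq]
  exact List.reverse_suffix.mpr hpq

theorem OccursAt.of_append_left_s8 {α : Type*} {r p S : List α} {t : ℕ}
    (h : OccursAt (r ++ p) S t) : OccursAt p S (t + r.length) := by
  obtain ⟨ht, hend, u, hu⟩ := h
  rw [List.length_append] at hend
  refine ⟨by omega, by omega, u, ?_⟩
  rw [show t + r.length - 1 = t - 1 + r.length by omega, ← List.drop_drop, ← hu,
    List.append_assoc, List.drop_left]

theorem followed_by_same_char_general {α : Type*} (p q S : List α) (c : α)
    (hp : p = p.reverse) (hq : q = q.reverse)
    (hpq : p <+: q)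
    (h : ∀ t : ℕ, OccursAt p S t →
      t + p.length ≤ S.length ∧ S[t + p.length - 1]? = some c) :
    ∀ t : ℕ, OccursAt q S t →
      t + q.length ≤ S.length ∧ S[t + q.length - 1]? = some c := by
  intro t hq_occ
  obtain ⟨r, rfl⟩ := hpq.isSuffix_of_palindrome hp hq
  obtain ⟨hle, hc⟩ := h (t + r.length) hq_occ.of_append_left_s8
  have hend : t + (r ++ p).length - 1 = t + r.length + p.length - 1 := by
    rw [List.length_append, Nat.add_assoc]
  exact ⟨by rw [List.length_append]; omega, hend ▸ hc⟩

/-- Let `p` and `q` be palindromes with `p` a proper prefix of `q`. If every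
occurrence of `p` in `S` is followed by the character `c`, then every
occurrence of `q` in `S` is followed by `c`. (Here `S[t + |p|]` is the
character at 1-indexed position `t + |p|`, i.e. `S[t + |p| - 1]?` with
0-indexed access.) -/
theorem followed_by_same_char {α : Type*} (p q S : List α) (c : α)
    (hp : p = p.reverse) (hq : q = q.reverse)
    (hpq : p <+: q) (hlen : p.length < q.length)
    (h : ∀ t : ℕ, OccursAt p S t →
      t + p.length ≤ S.length ∧ S[t + p.length - 1]? = some c) :
    ∀ t : ℕ, OccursAt q S t →
      t + q.length ≤ S.length ∧ S[t + q.length - 1]? = some c :=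
  followed_by_same_char_general p q S c hp hq hpq h
end

section
/- Let s be a string and let p be a prefix of s that is a palindrome. If p occurs at exactly one starting position in s (necessarily position 1), then p is the longest prefix of s that is a palindrome. -/
theorem occursAt_of_append_prefix {α : Type*} {p s a : List α} (h : a ++ p <+: s) :
    OccursAt p s (a.length + 1) := by
  obtain ⟨r, rfl⟩ := h
  refine ⟨by omega, by simp only [List.append_assoc, List.length_append]; omega, ?_⟩
  rw [Nat.add_sub_cancel, List.append_assoc, List.drop_left]
  exact List.prefix_append p r

theorem List.IsPrefix.isSuffix_of_eq_reverse {α : Type*} {p q : List α} (h : p <+: q)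
    (hp : p = p.reverse) (hq : q = q.reverse) : p <:+ q := by
  rw [hp, hq]
  exact h.reverse

/-- If `p` is a palindromic prefix of `s` occurring at exactly one starting
position in `s`, then `p` is the longest palindromic prefix of `s`. -/
theorem unique_occurrence_longest_pal_prefix {α : Type*} (s p : List α)
    (hp : p = p.reverse) (hpre : p <+: s)
    (huniq : ∃! t : ℕ, OccursAt p s t) :
    ∀ q : List α, q <+: s → q = q.reverse → q.length ≤ p.length := by
  intro q hq hq_pal
  by_contra! hlt
  obtain ⟨a, rfl⟩ : p <:+ q :=
    (List.prefix_of_prefix_length_le hpre hq hlt.le).isSuffix_of_eq_reverse hp hq_pal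
  have hfirst : OccursAt p s (([] : List α).length + 1) :=
    occursAt_of_append_prefix ((List.nil_append p).symm ▸ hpre)
  have hsame := huniq.unique (occursAt_of_append_prefix hq) hfirst
  rw [List.length_append] at hlt
  simp only [List.length_nil, Nat.add_right_cancel_iff] at hsame
  omega
end
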